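/- arXiv:1409.3977 — 3 statements merged into one kernel-verified Lean document; each statement's English description precedes it below -/
import Mathlib

section
/- Let G be an abelian group and ω : G × G → 𝕋 a 2-cocycle. Then for each fixed s ∈ G, the map h_ω(s) : G → 𝕋 defined by h_ω(s)(t) := ω(s,t)·conj(ω(t,s)) is a group homomorphism from G to 𝕋. -/
/-! The cocycle identities at `(s,t,t')`, `(t,s,t')` and `(t,t',s)`, together with commutativity
of `G`, give `ω(s,t+t')·ω(t,s)·ω(t',s) = ω(s,t)·ω(s,t')·ω(t+t',s)`, so `ω(s,·)/ω(·,s)` is additive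
for values in any commutative group. On `𝕋` the conjugate is the inverse, so it suffices to lift `ω`
to `Circle`. -/

theorem cocycle_div_swap_add {G M : Type*} [AddCommMagma G] [CommGroup M] (ω : G → G → M)
    (hcoc : ∀ s t r, ω s t * ω (s + t) r = ω s (t + r) * ω t r) (s t t' : G) :
    ω s (t + t') / ω (t + t') s = ω s t / ω t s * (ω s t' / ω t' s) := by
  rw [div_mul_div_comm, div_eq_div_iff_mul_eq_mul]
  apply mul_right_cancel (b := ω t t')
  calc ω s (t + t') * (ω t s * ω t' s) * ω t t'
      = ω s (t + t') * ω t t' * (ω t s * ω t' s) := by ac_rfl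
    _ = ω s t * ω t' s * (ω t s * ω (t + s) t') := by rw [← hcoc, add_comm s t]; ac_rfl
    _ = ω s t * ω t' s * (ω t (s + t') * ω s t') := by rw [hcoc]
    _ = ω s t * ω s t' * (ω t t' * ω (t + t') s) := by rw [hcoc, add_comm t' s]; ac_rfl
    _ = ω s t * ω s t' * ω (t + t') s * ω t t' := by ac_rfl

/-- For a 2-cocycle `ω` on an abelian group `G` and fixed `s`, the map
`t ↦ h_ω(s)(t) = ω(s,t)·conj(ω(t,s))` is a homomorphism from `G` to `𝕋`. -/
theorem stmt5 {G : Type*} [AddCommGroup G] (ω : G → G → ℂ)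
    (habs : ∀ s t, ‖ω s t‖ = 1)
    (hcoc : ∀ s t r, ω s t * ω (s + t) r = ω s (t + r) * ω t r) :
    ∀ s t t', ω s (t + t') * (starRingEnd ℂ) (ω (t + t') s)
      = (ω s t * (starRingEnd ℂ) (ω t s)) * (ω s t' * (starRingEnd ℂ) (ω t' s)) := by
  let ω' : G → G → Circle := fun s t ↦ ⟨ω s t, mem_sphere_zero_iff_norm.2 (habs s t)⟩
  have hcoc' : ∀ s t r, ω' s t * ω' (s + t) r = ω' s (t + r) * ω' t r :=
    fun s t r ↦ Circle.ext (hcoc s t r)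
  intro s t t'
  simpa only [div_eq_mul_inv, Circle.coe_mul, Circle.coe_inv_eq_conj] using
    congrArg ((↑) : Circle → ℂ) (cocycle_div_swap_add ω' hcoc' s t t')
end

section
/- Let G be an abelian group and ω : G × G → 𝕋 a 2-cocycle. Then the map s ↦ h_ω(s), where h_ω(s)(t) := ω(s,t)·conj(ω(t,s)), is a group homomorphism from G to the group Hom(G, 𝕋) of characters of G (with pointwise multiplication). -/
section Antisymmetrization

variable {G K : Type*} [Field K]

/-- The paper's `h_ω(s)(t)`; for `𝕋`-valued `ω` the division is `ω s t * conj (ω t s)`. -/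
def antisymmetrization (ω : G → G → K) (s t : G) : K := ω s t / ω t s

variable {ω : G → G → K}

theorem antisymmetrization_swap (s t : G) :
    antisymmetrization ω t s = (antisymmetrization ω s t)⁻¹ :=
  (inv_div _ _).symm

/-- Cocycle identities at `(s,t,t')`, `(t,s,t')` and `(t,t',s)` combine, after cancelling
`ω t t'`, to make `antisymmetrization ω s` a character. -/
theorem antisymmetrization_add_right [AddCommGroup G] (hne : ∀ s t, ω s t ≠ 0)
    (hcoc : ∀ s t r, ω s t * ω (s + t) r = ω s (t + r) * ω t r) (s t t' : G) :
    antisymmetrization ω s (t + t') = antisymmetrization ω s t * antisymmetrization ω s t' := by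
  have A := hcoc s t t'
  have B := hcoc t s t'
  have C := hcoc t t' s
  rw [add_comm t s] at B
  rw [add_comm t' s] at C
  unfold antisymmetrization
  rw [div_mul_div_comm, div_eq_div_iff (hne _ _) (mul_ne_zero (hne _ _) (hne _ _))]
  refine mul_right_cancel₀ (hne t t') ?_
  linear_combination -(ω t s * ω t' s) * A + (ω s t * ω t' s) * B - (ω s t * ω s t') * C

theorem antisymmetrization_add_left [AddCommGroup G] (hne : ∀ s t, ω s t ≠ 0)
    (hcoc : ∀ s t r, ω s t * ω (s + t) r = ω s (t + r) * ω t r) (s s' t : G) :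
    antisymmetrization ω (s + s') t = antisymmetrization ω s t * antisymmetrization ω s' t := by
  simp only [antisymmetrization_swap t, antisymmetrization_add_right hne hcoc t s s', mul_inv]

end Antisymmetrization

theorem Complex.mul_conj_eq_div_of_norm_eq_one {z w : ℂ} (hw : ‖w‖ = 1) :
    z * (starRingEnd ℂ) w = z / w := by
  rw [← Complex.inv_eq_conj hw, div_eq_mul_inv]

/-- For a 2-cocycle `ω` on an abelian group `G`, the map
`s ↦ h_ω(s)`, with `h_ω(s)(t) = ω(s,t)·conj(ω(t,s))`, is a group homomorphism from `G`
into the group `Hom(G,𝕋)` of characters of `G` with pointwise multiplication: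
each `h_ω(s)` is a character, and `h_ω(s+s') = h_ω(s)·h_ω(s')` pointwise. -/
theorem stmt6 {G : Type*} [AddCommGroup G] (ω : G → G → ℂ)
    (habs : ∀ s t, ‖ω s t‖ = 1)
    (hcoc : ∀ s t r, ω s t * ω (s + t) r = ω s (t + r) * ω t r) :
    (∀ s t t', ω s (t + t') * (starRingEnd ℂ) (ω (t + t') s)
      = (ω s t * (starRingEnd ℂ) (ω t s)) * (ω s t' * (starRingEnd ℂ) (ω t' s))) ∧
    (∀ s s' t, ω (s + s') t * (starRingEnd ℂ) (ω t (s + s'))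
      = (ω s t * (starRingEnd ℂ) (ω t s)) * (ω s' t * (starRingEnd ℂ) (ω t s'))) := by
  have hne : ∀ s t, ω s t ≠ 0 := fun s t ↦ norm_ne_zero_iff.mp (by simp [habs])
  simp only [Complex.mul_conj_eq_div_of_norm_eq_one (habs _ _)]
  exact ⟨antisymmetrization_add_right hne hcoc, antisymmetrization_add_left hne hcoc⟩
end

section
/- Let J ∈ M_n(ℝ) be skew-symmetric. For Schwartz functions f, g on ℝⁿ, the Fourier transform of the deformed product f ×_J g, defined by (f ×_J g)(x) = ∫∫ f(x−Ju) g(x−v) e^{2πi⟨u,v⟩} dv du (iterated integral), satisfies (f ×_J g)^ = f̂ *_{ω_J} ĝ, where (φ *_{ω_J} ψ)(z) = ∫ φ(u) ψ(z−u) e^{2πi⟨Ju, z−u⟩} du and f̂(u) = ∫ f(s) e^{−2πi⟨s,u⟩} ds. -/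
open Matrix Real MeasureTheory

/-- The Fourier transform `f̂(u) = ∫ f(s) e^{−2πi⟨s,u⟩} ds` on `ℝⁿ`. -/
noncomputable def fourierT {n : ℕ} (f : (Fin n → ℝ) → ℂ) : (Fin n → ℝ) → ℂ :=
  fun u => ∫ s, f s * Complex.exp (-(2 * (π : ℂ) * Complex.I * ((s ⬝ᵥ u : ℝ) : ℂ)))

/-- Rieffel's deformed product
`(f ×_J g)(x) = ∫∫ f(x−Ju) g(x−v) e^{2πi⟨u,v⟩} dv du` (iterated integral). -/
noncomputable def deformedProd {n : ℕ} (J : Matrix (Fin n) (Fin n) ℝ)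
    (f g : (Fin n → ℝ) → ℂ) : (Fin n → ℝ) → ℂ :=
  fun x => ∫ u, ∫ v,
    f (x - J.mulVec u) * g (x - v) * Complex.exp (2 * (π : ℂ) * Complex.I * ((u ⬝ᵥ v : ℝ) : ℂ))

/-- The `ω_J`-twisted convolution
`(φ *_{ω_J} ψ)(z) = ∫ φ(u) ψ(z−u) e^{2πi⟨Ju, z−u⟩} du`. -/
noncomputable def twConvJ {n : ℕ} (J : Matrix (Fin n) (Fin n) ℝ)
    (φ ψ : (Fin n → ℝ) → ℂ) : (Fin n → ℝ) → ℂ :=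
  fun z => ∫ u,
    φ u * ψ (z - u) * Complex.exp (2 * (π : ℂ) * Complex.I * ((J.mulVec u ⬝ᵥ (z - u) : ℝ) : ℂ))

/-!
Integrating out `v` gives `(f ×_J g)(x) = ∫ ĝ(u) f(x − Ju) e^{2πi⟨u,x⟩} du`. After the Fourier
transform the integrals over `x` and `u` may be exchanged, because the shear `(u, x) ↦ (u, x − Ju)`
preserves Lebesgue measure and so `|ĝ(u)| |f(x − Ju)|` is integrable. The `x`-integral is then the
Fourier transform of a translate of `f`, namely `f̂(z − u) e^{−2πi⟨Ju, z−u⟩}`, and the substitution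
`u ↦ z − u` together with `⟨J(z − u), u⟩ = −⟨Ju, z − u⟩` turns the result into `f̂ *_{ω_J} ĝ`.
-/

lemma Matrix.mulVec_dotProduct_of_transpose_eq_neg {m R : Type*} [Fintype m] [CommRing R]
    {J : Matrix m m R} (hJ : Jᵀ = -J) (a b : m → R) : J *ᵥ a ⬝ᵥ b = -(J *ᵥ b ⬝ᵥ a) := by
  rw [dotProduct_comm, dotProduct_mulVec, ← mulVec_transpose, hJ, neg_mulVec, neg_dotProduct]

section

variable {ι : Type*} [Fintype ι]

lemma measurePreserving_sub_mulVec (J : Matrix ι ι ℝ) :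
    MeasurePreserving (fun p : (ι → ℝ) × (ι → ℝ) => (p.1, p.2 - J *ᵥ p.1)) := by
  refine (MeasurePreserving.id volume).skew_product (g := fun u x => x - J *ᵥ u) ?_
    (.of_forall fun u => (measurePreserving_sub_right volume (J *ᵥ u)).map_eq)
  exact (continuous_snd.sub ((continuous_const.matrix_mulVec continuous_id).comp
    continuous_fst)).measurable

lemma integrable_mul_comp_sub_mulVec (J : Matrix ι ι ℝ)
    {φ ψ : (ι → ℝ) → ℂ} (hφ : Integrable φ) (hψ : Integrable ψ) :
    Integrable (fun p : (ι → ℝ) × (ι → ℝ) => ψ p.1 * φ (p.2 - J *ᵥ p.1)) :=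
  (measurePreserving_sub_mulVec J).integrable_comp_of_integrable (hψ.mul_prod hφ)

end

section

open FourierTransform SchwartzMap

variable {n : ℕ}

lemma fourierT_eq_fourier (f : (Fin n → ℝ) → ℂ) (u : Fin n → ℝ) :
    fourierT f u =
      𝓕 (fun v : EuclideanSpace ℝ (Fin n) => f v.ofLp) (WithLp.toLp 2 u) := by
  rw [Real.fourier_eq', ← (PiLp.volume_preserving_toLp (Fin n)).integral_comp'
    (f := MeasurableEquiv.toLp 2 (Fin n → ℝ))]
  unfold fourierT
  congr 1 with s
  rw [dotProduct_comm]
  simp only [MeasurableEquiv.toLp_apply, PiLp.inner_apply, RCLike.inner_apply, conj_trivial,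
    dotProduct, smul_eq_mul]
  push_cast
  ring_nf

lemma integrable_fourierT (g : 𝓢(Fin n → ℝ, ℂ)) : Integrable (fourierT ⇑g) := by
  let G : 𝓢(EuclideanSpace ℝ (Fin n), ℂ) :=
    𝓕 (compCLMOfContinuousLinearEquiv ℝ (PiLp.continuousLinearEquiv 2 ℝ (fun _ : Fin n => ℝ)) g)
  have hg : fourierT ⇑g = ⇑G ∘ WithLp.toLp 2 := funext (fourierT_eq_fourier g)
  rw [hg]
  exact (PiLp.volume_preserving_toLp (Fin n)).integrable_comp_of_integrable G.integrable

lemma integral_sub_right_mul_exp_neg_dotProduct (f : (Fin n → ℝ) → ℂ) (a w : Fin n → ℝ) :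
    ∫ x, f (x - a) * Complex.exp (-(2 * (π : ℂ) * Complex.I * ((x ⬝ᵥ w : ℝ) : ℂ))) =
      Complex.exp (-(2 * (π : ℂ) * Complex.I * ((a ⬝ᵥ w : ℝ) : ℂ))) * fourierT f w := by
  rw [fourierT, ← integral_add_right_eq_self _ a, ← integral_const_mul]
  congr 1 with x
  simp only [add_sub_cancel_right]
  rw [mul_left_comm, ← Complex.exp_add, add_dotProduct]
  push_cast
  ring_nf

lemma integral_sub_left_mul_exp_dotProduct (g : (Fin n → ℝ) → ℂ) (x u : Fin n → ℝ) :
    ∫ v, g (x - v) * Complex.exp (2 * (π : ℂ) * Complex.I * ((u ⬝ᵥ v : ℝ) : ℂ)) =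
      Complex.exp (2 * (π : ℂ) * Complex.I * ((u ⬝ᵥ x : ℝ) : ℂ)) * fourierT g u := by
  unfold fourierT
  rw [← integral_sub_left_eq_self _ volume x, ← integral_const_mul]
  congr 1 with v
  rw [sub_sub_cancel, mul_left_comm, ← Complex.exp_add, dotProduct_sub, dotProduct_comm v]
  push_cast
  ring_nf

lemma deformedProd_apply (J : Matrix (Fin n) (Fin n) ℝ) (f g : (Fin n → ℝ) → ℂ)
    (x : Fin n → ℝ) :
    deformedProd J f g x = ∫ u, fourierT g u * f (x - J *ᵥ u) *
      Complex.exp (2 * (π : ℂ) * Complex.I * ((u ⬝ᵥ x : ℝ) : ℂ)) := by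
  unfold deformedProd
  congr 1 with u
  simp_rw [mul_assoc (f _)]
  rw [integral_const_mul, integral_sub_left_mul_exp_dotProduct]
  ring

lemma twConvJ_apply_of_transpose_eq_neg {J : Matrix (Fin n) (Fin n) ℝ} (hJ : Jᵀ = -J)
    (φ ψ : (Fin n → ℝ) → ℂ) (z : Fin n → ℝ) :
    twConvJ J φ ψ z = ∫ u, ψ u * φ (z - u) *
      Complex.exp (-(2 * (π : ℂ) * Complex.I * ((J *ᵥ u ⬝ᵥ (z - u) : ℝ) : ℂ))) := by
  unfold twConvJ
  rw [← integral_sub_left_eq_self _ volume z]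
  congr 1 with u
  rw [sub_sub_cancel, mulVec_dotProduct_of_transpose_eq_neg hJ]
  push_cast
  ring_nf
end

/-- For skew-symmetric `J` and Schwartz functions `f, g` on `ℝⁿ`, the
Fourier transform intertwines Rieffel's deformed product with `ω_J`-twisted convolution:
`(f ×_J g)^ = f̂ *_{ω_J} ĝ`. -/
theorem stmt15 {n : ℕ} (J : Matrix (Fin n) (Fin n) ℝ) (hJ : J.transpose = -J)
    (f g : SchwartzMap (Fin n → ℝ) ℂ) :
    ∀ z, fourierT (deformedProd J (⇑f) (⇑g)) z = twConvJ J (fourierT ⇑f) (fourierT ⇑g) z := by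
  intro z
  have hint : Integrable (Function.uncurry fun x u => fourierT g u * f (x - J *ᵥ u) *
      Complex.exp (-(2 * (π : ℂ) * Complex.I * ((x ⬝ᵥ (z - u) : ℝ) : ℂ))))
      (volume.prod volume) := by
    refine (integrable_mul_comp_sub_mulVec J f.integrable (integrable_fourierT g)).swap.mul_bdd
      (c := 1) ?_ (.of_forall fun p => ?_)
    · fun_prop
    · simp [Complex.norm_exp]
  calc fourierT (deformedProd J f g) z
      = ∫ x, ∫ u, fourierT g u * f (x - J *ᵥ u) *
          Complex.exp (-(2 * (π : ℂ) * Complex.I * ((x ⬝ᵥ (z - u) : ℝ) : ℂ))) := by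
        rw [fourierT]
        congr 1 with x
        rw [deformedProd_apply, ← integral_mul_const]
        congr 1 with u
        rw [mul_assoc, ← Complex.exp_add, dotProduct_sub, dotProduct_comm u]
        push_cast
        ring_nf
    _ = ∫ u, ∫ x, fourierT g u * f (x - J *ᵥ u) *
          Complex.exp (-(2 * (π : ℂ) * Complex.I * ((x ⬝ᵥ (z - u) : ℝ) : ℂ))) :=
        integral_integral_swap hint
    _ = ∫ u, fourierT g u * fourierT f (z - u) *
          Complex.exp (-(2 * (π : ℂ) * Complex.I * ((J *ᵥ u ⬝ᵥ (z - u) : ℝ) : ℂ))) := by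
        congr 1 with u
        simp_rw [mul_assoc (fourierT _ u)]
        rw [integral_const_mul, integral_sub_right_mul_exp_neg_dotProduct, mul_comm (Complex.exp _)]
    _ = twConvJ J (fourierT f) (fourierT g) z :=
        (twConvJ_apply_of_transpose_eq_neg hJ _ _ z).symm
end
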